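/- arXiv:2103.16785 — 7 statements merged into one kernel-verified Lean document; each statement's English description precedes it below -/
import Mathlib

section
/- Let F : ℝⁿ → ℝ be differentiable with ω₁-Lipschitz gradient for some ω₁ > 0. Let x, h ∈ ℝⁿ with h ≠ 0 satisfy the sufficient-descent (angle) condition −⟨∇F(x), h⟩ ≥ δ‖∇F(x)‖·‖h‖ for some δ > 0, and set α = −⟨∇F(x), h⟩ / (ω₁‖h‖²). Then F(x) − F(x + α·h) ≥ δ²‖∇F(x)‖² / (2ω₁). -/
open RealInnerProductSpace

/-- Value of `α ↦ α a + c α² / 2` at its critical point `-a / c` (also valid for `c = 0`,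
where `-a / 0 = 0`). -/
theorem neg_div_mul_add_half_mul_neg_div_sq (a c : ℝ) :
    -a / c * a + c / 2 * (-a / c) ^ 2 = -(a ^ 2 / (2 * c)) := by
  rcases eq_or_ne c 0 with rfl | hc
  · simp
  · field_simp; ring

section LipschitzGradient

variable {E : Type*} [NormedAddCommGroup E] [InnerProductSpace ℝ E] [CompleteSpace E]
  {F : E → ℝ} {ω : ℝ}

theorem Differentiable.hasDerivAt_apply_add_smul (hF : Differentiable ℝ F) (x v : E) (t : ℝ) :
    HasDerivAt (fun s : ℝ => F (x + s • v)) ⟪gradient F (x + t • v), v⟫ t := by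
  have hline : HasDerivAt (fun s : ℝ => x + s • v) v t := by
    simpa using ((hasDerivAt_id t).smul_const v).const_add x
  simpa [Function.comp_def] using
    (hF (x + t • v)).hasGradientAt.hasFDerivAt.comp_hasDerivAt t hline

theorem inner_gradient_add_smul_sub_le
    (hlip : ∀ x y : E, ‖gradient F x - gradient F y‖ ≤ ω * ‖x - y‖)
    (x v : E) {t : ℝ} (ht : 0 ≤ t) :
    ⟪gradient F (x + t • v) - gradient F x, v⟫ ≤ ω * ‖v‖ ^ 2 * t :=
  calc ⟪gradient F (x + t • v) - gradient F x, v⟫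
      ≤ ‖gradient F (x + t • v) - gradient F x‖ * ‖v‖ := real_inner_le_norm _ _
    _ ≤ ω * ‖x + t • v - x‖ * ‖v‖ := by gcongr; exact hlip _ _
    _ = ω * ‖v‖ ^ 2 * t := by
        rw [add_sub_cancel_left, norm_smul, Real.norm_of_nonneg ht]; ring

/-- The descent lemma: an `ω`-Lipschitz gradient makes `F` lie below its quadratic model. -/
theorem Differentiable.apply_add_le_of_lipschitz_gradient (hF : Differentiable ℝ F)
    (hlip : ∀ x y : E, ‖gradient F x - gradient F y‖ ≤ ω * ‖x - y‖) (x v : E) :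
    F (x + v) ≤ F x + ⟪gradient F x, v⟫ + ω / 2 * ‖v‖ ^ 2 := by
  set φ : ℝ → ℝ := fun t => F (x + t • v) - ⟪gradient F x, v⟫ * t - ω / 2 * ‖v‖ ^ 2 * t ^ 2
  have hφ : ∀ t, HasDerivAt φ
      (⟪gradient F (x + t • v), v⟫ - ⟪gradient F x, v⟫ - ω * ‖v‖ ^ 2 * t) t := fun t => by
    have hquad := (hasDerivAt_pow 2 t).const_mul (ω / 2 * ‖v‖ ^ 2)
    refine (((hF.hasDerivAt_apply_add_smul x v t).sub
      ((hasDerivAt_id t).const_mul ⟪gradient F x, v⟫)).sub hquad).congr_deriv ?_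
    push_cast
    ring
  have hanti : AntitoneOn φ (Set.Ici 0) := by
    refine antitoneOn_of_hasDerivWithinAt_nonpos (convex_Ici 0)
      (fun t _ => (hφ t).continuousAt.continuousWithinAt) (fun t _ => (hφ t).hasDerivWithinAt)
      fun t ht => ?_
    rw [interior_Ici] at ht
    have := inner_gradient_add_smul_sub_le hlip x v (le_of_lt ht)
    rw [inner_sub_left] at this
    linarith
  have h01 := hanti Set.self_mem_Ici (Set.mem_Ici.2 zero_le_one) zero_le_one
  simp only [φ, zero_smul, one_smul, add_zero, mul_zero, mul_one, sub_zero, one_pow] at h01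
  linarith

/-- Minimizing the quadratic model of the descent lemma along `h`. -/
theorem Differentiable.sq_inner_div_le_sub_apply_add_smul (hF : Differentiable ℝ F)
    (hlip : ∀ x y : E, ‖gradient F x - gradient F y‖ ≤ ω * ‖x - y‖) (x h : E) :
    ⟪gradient F x, h⟫ ^ 2 / (2 * (ω * ‖h‖ ^ 2)) ≤
      F x - F (x + (-⟪gradient F x, h⟫ / (ω * ‖h‖ ^ 2)) • h) := by
  have hdesc := hF.apply_add_le_of_lipschitz_gradient hlip x
    ((-⟪gradient F x, h⟫ / (ω * ‖h‖ ^ 2)) • h)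
  have hmin := neg_div_mul_add_half_mul_neg_div_sq ⟪gradient F x, h⟫ (ω * ‖h‖ ^ 2)
  rw [real_inner_smul_right, norm_smul, mul_pow, Real.norm_eq_abs, sq_abs] at hdesc
  nlinarith

end LipschitzGradient

/-- Equation (f.decrease): per-step decrease bound under the sufficient-descent
(angle) condition `-⟪∇F x, h⟫ ≥ δ ‖∇F x‖ ‖h‖`. -/
theorem stmt_2 (n : ℕ) (ω₁ : ℝ) (hω₁ : 0 < ω₁)
    (F : EuclideanSpace ℝ (Fin n) → ℝ)
    (hdiff : Differentiable ℝ F)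
    (hlip : ∀ x y : EuclideanSpace ℝ (Fin n),
      ‖gradient F x - gradient F y‖ ≤ ω₁ * ‖x - y‖)
    (x h : EuclideanSpace ℝ (Fin n)) (hh : h ≠ 0)
    (δ : ℝ) (hδ : 0 < δ)
    (hangle : -⟪gradient F x, h⟫ ≥ δ * (‖gradient F x‖ * ‖h‖))
    (α : ℝ) (hα : α = -⟪gradient F x, h⟫ / (ω₁ * ‖h‖ ^ 2)) :
    F x - F (x + α • h) ≥ δ ^ 2 * ‖gradient F x‖ ^ 2 / (2 * ω₁) := by
  subst hα
  have hh' : 0 < ‖h‖ := norm_pos_iff.2 hh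
  have hsq : (δ * (‖gradient F x‖ * ‖h‖)) ^ 2 ≤ ⟪gradient F x, h⟫ ^ 2 := by
    rw [← neg_sq ⟪gradient F x, h⟫]
    exact pow_le_pow_left₀ (by positivity) hangle 2
  calc δ ^ 2 * ‖gradient F x‖ ^ 2 / (2 * ω₁)
      = (δ * (‖gradient F x‖ * ‖h‖)) ^ 2 / (2 * (ω₁ * ‖h‖ ^ 2)) := by field_simp
    _ ≤ ⟪gradient F x, h⟫ ^ 2 / (2 * (ω₁ * ‖h‖ ^ 2)) := by gcongr
    _ ≤ F x - F (x + (-⟪gradient F x, h⟫ / (ω₁ * ‖h‖ ^ 2)) • h) :=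
        hdiff.sq_inner_div_le_sub_apply_add_smul hlip x h
end

section
/- Let F : ℝⁿ → ℝ be differentiable with ω₁-Lipschitz gradient (ω₁ > 0) and suppose F(x) ≥ 0 for all x ∈ ℝⁿ. Let (x_t)_{t≥0} be a sequence in ℝⁿ with x_{t+1} = x_t + α_t h_t, where each h_t ≠ 0 satisfies −⟨∇F(x_t), h_t⟩ ≥ δ‖∇F(x_t)‖·‖h_t‖ for a fixed δ > 0, and α_t = −⟨∇F(x_t), h_t⟩ / (ω₁‖h_t‖²). Then Σ_{t=0}^∞ ‖∇F(x_t)‖² ≤ (2ω₁/δ²)·F(x_0); in particular the series of squared gradient norms converges. -/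
/-!
Lipschitz continuity of `∇F` gives the quadratic upper model
`F (x + v) ≤ F x + ⟪∇F x, v⟫ + ω₁/2 ‖v‖²`, and the step `α_t` is the exact minimiser of this model
along `h_t`. Each iteration therefore decreases `F` by `⟪∇F x_t, h_t⟫² / (2 ω₁ ‖h_t‖²)`, which the
angle condition bounds below by `δ²/(2ω₁) ‖∇F x_t‖²`. Telescoping against `F ≥ 0` bounds the partial
sums of the squared gradient norms by `2 ω₁ F x₀ / δ²`.
-/

open RealInnerProductSpace

section Descent

variable {E : Type*} [NormedAddCommGroup E] [InnerProductSpace ℝ E]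

theorem map_add_le_of_lipschitz_gradient [CompleteSpace E] {F : E → ℝ} {L : ℝ}
    (hdiff : Differentiable ℝ F) (hlip : ∀ x y, ‖gradient F x - gradient F y‖ ≤ L * ‖x - y‖)
    (x v : E) : F (x + v) ≤ F x + ⟪gradient F x, v⟫ + L / 2 * ‖v‖ ^ 2 := by
  -- `φ` is `F` minus its quadratic model along the segment; it is antitone on `[0, 1]`
  set φ : ℝ → ℝ := fun s => F (x + s • v) - s * ⟪gradient F x, v⟫ - L / 2 * s ^ 2 * ‖v‖ ^ 2
  have hφ' : ∀ s, HasDerivAt φ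
      (⟪gradient F (x + s • v), v⟫ - ⟪gradient F x, v⟫ - L * s * ‖v‖ ^ 2) s := by
    intro s
    have hline : HasDerivAt (fun s : ℝ => x + s • v) v s := by
      simpa using ((hasDerivAt_id s).smul_const v).const_add x
    have hF : HasDerivAt (fun s : ℝ => F (x + s • v)) ⟪gradient F (x + s • v), v⟫ s :=
      (hdiff _).hasGradientAt.hasFDerivAt.comp_hasDerivAt s hline
    refine ((hF.sub ((hasDerivAt_id' s).mul_const ⟪gradient F x, v⟫)).sub
      (((hasDerivAt_pow 2 s).const_mul (L / 2)).mul_const (‖v‖ ^ 2))).congr_deriv ?_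
    simp only [one_mul, Nat.cast_ofNat, Nat.add_one_sub_one, pow_one]
    ring
  have hφ'_nonpos : ∀ s, 0 ≤ s →
      ⟪gradient F (x + s • v), v⟫ - ⟪gradient F x, v⟫ - L * s * ‖v‖ ^ 2 ≤ 0 := by
    intro s hs
    have hbound : ⟪gradient F (x + s • v) - gradient F x, v⟫ ≤ L * s * ‖v‖ ^ 2 :=
      calc ⟪gradient F (x + s • v) - gradient F x, v⟫
          ≤ ‖gradient F (x + s • v) - gradient F x‖ * ‖v‖ := real_inner_le_norm _ _
        _ ≤ L * ‖x + s • v - x‖ * ‖v‖ := by gcongr; exact hlip _ _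
        _ = L * s * ‖v‖ ^ 2 := by
          rw [add_sub_cancel_left, norm_smul, Real.norm_of_nonneg hs]; ring
    rw [inner_sub_left] at hbound
    linarith
  have hanti : AntitoneOn φ (Set.Icc 0 1) :=
    antitoneOn_of_hasDerivWithinAt_nonpos (convex_Icc 0 1)
      (fun s _ => (hφ' s).continuousAt.continuousWithinAt)
      (fun s _ => (hφ' s).hasDerivWithinAt)
      (fun s hs => hφ'_nonpos s (interior_subset hs).1)
  have hends := hanti (Set.left_mem_Icc.2 zero_le_one) (Set.right_mem_Icc.2 zero_le_one) zero_le_one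
  simp only [φ, one_smul, zero_smul, add_zero, one_mul, zero_mul, sub_zero, one_pow,
    zero_pow two_ne_zero, mul_zero] at hends
  linarith

theorem map_add_optimal_step_le {F : E → ℝ} {L : ℝ} (hL : 0 < L) {x g h : E} (hh : h ≠ 0)
    (hdesc : ∀ v, F (x + v) ≤ F x + ⟪g, v⟫ + L / 2 * ‖v‖ ^ 2) :
    F (x + (-⟪g, h⟫ / (L * ‖h‖ ^ 2)) • h) ≤ F x - ⟪g, h⟫ ^ 2 / (2 * L * ‖h‖ ^ 2) := by
  have hh' : ‖h‖ ≠ 0 := norm_ne_zero_iff.2 hh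
  have hmodel : ⟪g, (-⟪g, h⟫ / (L * ‖h‖ ^ 2)) • h⟫ + L / 2 * ‖(-⟪g, h⟫ / (L * ‖h‖ ^ 2)) • h‖ ^ 2
      = -(⟪g, h⟫ ^ 2 / (2 * L * ‖h‖ ^ 2)) := by
    rw [real_inner_smul_right, norm_smul, mul_pow, Real.norm_eq_abs, sq_abs]
    field_simp
    ring
  linarith [hdesc ((-⟪g, h⟫ / (L * ‖h‖ ^ 2)) • h)]

theorem map_add_optimal_step_le_sub_sq_norm {F : E → ℝ} {L δ : ℝ} (hL : 0 < L) (hδ : 0 ≤ δ)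
    {x g h : E} (hh : h ≠ 0) (hdesc : ∀ v, F (x + v) ≤ F x + ⟪g, v⟫ + L / 2 * ‖v‖ ^ 2)
    (hangle : -⟪g, h⟫ ≥ δ * (‖g‖ * ‖h‖)) :
    F (x + (-⟪g, h⟫ / (L * ‖h‖ ^ 2)) • h) ≤ F x - δ ^ 2 / (2 * L) * ‖g‖ ^ 2 := by
  have hh2 : 0 < ‖h‖ ^ 2 := by positivity
  have hsq : (δ * (‖g‖ * ‖h‖)) ^ 2 ≤ ⟪g, h⟫ ^ 2 := by
    rw [← neg_sq ⟪g, h⟫]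
    exact pow_le_pow_left₀ (by positivity) hangle 2
  have hgain : δ ^ 2 / (2 * L) * ‖g‖ ^ 2 ≤ ⟪g, h⟫ ^ 2 / (2 * L * ‖h‖ ^ 2) := by
    rw [div_mul_eq_mul_div, div_le_div_iff₀ (by positivity) (by positivity)]
    nlinarith
  linarith [map_add_optimal_step_le hL hh hdesc]

end Descent

theorem summable_and_tsum_le_of_mul_le_sub_succ {u f : ℕ → ℝ} {c : ℝ} (hc : 0 < c)
    (hu : ∀ t, 0 ≤ u t) (hf : ∀ t, 0 ≤ f t) (hdec : ∀ t, c * u t ≤ f t - f (t + 1)) :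
    Summable u ∧ ∑' t, u t ≤ f 0 / c := by
  have hpartial : ∀ N, ∑ t ∈ Finset.range N, u t ≤ f 0 / c := by
    intro N
    have htele : c * ∑ t ∈ Finset.range N, u t ≤ f 0 - f N := by
      rw [Finset.mul_sum, ← Finset.sum_range_sub']
      exact Finset.sum_le_sum fun t _ => hdec t
    rw [le_div_iff₀ hc]
    linarith [hf N]
  exact ⟨summable_of_sum_range_le hu hpartial, Real.tsum_le_of_sum_range_le hu hpartial⟩

/-- Summability bound in the proof of Theorem A.2 (th.stationary): the squared
gradient norms along the boosting iterates are summable with sum at most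
`2 ω₁ F(x₀) / δ²`. -/
theorem stmt_3 (n : ℕ) (ω₁ : ℝ) (hω₁ : 0 < ω₁)
    (F : EuclideanSpace ℝ (Fin n) → ℝ)
    (hdiff : Differentiable ℝ F)
    (hlip : ∀ x y : EuclideanSpace ℝ (Fin n),
      ‖gradient F x - gradient F y‖ ≤ ω₁ * ‖x - y‖)
    (hF0 : ∀ x, 0 ≤ F x)
    (δ : ℝ) (hδ : 0 < δ)
    (x h : ℕ → EuclideanSpace ℝ (Fin n)) (α : ℕ → ℝ)
    (hh : ∀ t, h t ≠ 0)
    (hangle : ∀ t, -⟪gradient F (x t), h t⟫ ≥ δ * (‖gradient F (x t)‖ * ‖h t‖))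
    (hα : ∀ t, α t = -⟪gradient F (x t), h t⟫ / (ω₁ * ‖h t‖ ^ 2))
    (hstep : ∀ t, x (t + 1) = x t + α t • h t) :
    Summable (fun t => ‖gradient F (x t)‖ ^ 2) ∧
      ∑' t, ‖gradient F (x t)‖ ^ 2 ≤ (2 * ω₁ / δ ^ 2) * F (x 0) := by
  have hdecrease : ∀ t, δ ^ 2 / (2 * ω₁) * ‖gradient F (x t)‖ ^ 2 ≤ F (x t) - F (x (t + 1)) := by
    intro t
    have hstep_le := map_add_optimal_step_le_sub_sq_norm hω₁ hδ.le (hh t)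
      (map_add_le_of_lipschitz_gradient hdiff hlip (x t)) (hangle t)
    rw [← hα t, ← hstep t] at hstep_le
    linarith
  have hbound := summable_and_tsum_le_of_mul_le_sub_succ (by positivity) (fun t => by positivity)
    (fun t => hF0 (x t)) hdecrease
  exact ⟨hbound.1, hbound.2.trans_eq (by rw [div_div_eq_mul_div]; ring)⟩
end

section
/- Let (X, d) be a metric space, let x_1, …, x_n ∈ X, let S ⊆ X be a nonempty finite set containing x_1, …, x_n, let ε > 0, ω₂ > 0, and let ℓ_1, …, ℓ_n : X → ℝ each be ω₂-Lipschitz with respect to d. Define B(λ) = λε + (1/n)·Σ_{i=1}^n max_{x ∈ S} [ℓ_i(x) − λ·d(x, x_i)²] for λ ≥ 0. Then every minimizer of B over [0, ∞) (every λ_n ≥ 0 with B(λ_n) = inf_{λ ≥ 0} B(λ)) satisfies λ_n ≤ ω₂ / √ε. -/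
/-!
Put `C = (1/n) ∑ ℓᵢ(xᵢ)`. Taking `x = xᵢ` in each maximum gives `B λ ≥ λε + C` for every `λ`,
while the Lipschitz bound and `ω₂ d - λ d² ≤ ω₂² / (4λ)` give `B λ ≤ λε + C + ω₂² / (4λ)` for
`λ > 0`. Comparing a minimizer with `λ = ω₂ / (2√ε)` yields `λₙ ε ≤ ω₂ √ε`.
-/

open Finset

lemma mul_sub_mul_sq_le_sq_div {ω lam : ℝ} (hlam : 0 < lam) (t : ℝ) :
    ω * t - lam * t ^ 2 ≤ ω ^ 2 / (4 * lam) := by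
  rw [le_div_iff₀ (by positivity)]
  nlinarith [sq_nonneg (ω - 2 * lam * t)]

lemma Fin.one_div_mul_sum_add_const {n : ℕ} (hn : n ≠ 0) (a : Fin n → ℝ) (c : ℝ) :
    1 / n * ∑ i, (a i + c) = 1 / n * ∑ i, a i + c := by
  have hn' : (n : ℝ) ≠ 0 := Nat.cast_ne_zero.mpr hn
  rw [sum_add_distrib, sum_const, nsmul_eq_mul, mul_add, ← mul_assoc, one_div_mul_cancel hn',
    one_mul]

namespace Finset

variable {X : Type*} [PseudoMetricSpace X] {S : Finset X} (hS : S.Nonempty)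

lemma le_sup'_sub_mul_dist_sq (f : X → ℝ) {a : X} (ha : a ∈ S) (lam : ℝ) :
    f a ≤ S.sup' hS (fun x => f x - lam * dist x a ^ 2) :=
  le_sup'_of_le _ ha (by simp)

lemma sup'_sub_mul_dist_sq_le {f : X → ℝ} {a : X} {ω lam : ℝ}
    (hf : ∀ x, f x - f a ≤ ω * dist x a) (hlam : 0 < lam) :
    S.sup' hS (fun x => f x - lam * dist x a ^ 2) ≤ f a + ω ^ 2 / (4 * lam) :=
  sup'_le _ _ fun x _ => by
    linarith [hf x, mul_sub_mul_sq_le_sq_div (ω := ω) hlam (dist x a)]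

end Finset

lemma le_of_eq_ciInf_Ici {B : ℝ → ℝ} {a c m lam : ℝ} (hbdd : ∀ μ, a ≤ μ → c ≤ B μ)
    (hmin : B m = ⨅ μ : Set.Ici a, B μ.1) (hlam : a ≤ lam) : B m ≤ B lam := by
  rw [hmin]
  exact ciInf_le ⟨c, Set.forall_mem_range.mpr fun μ : Set.Ici a => hbdd μ.1 μ.2⟩ ⟨lam, hlam⟩

/-- The bound `t ε ≤ λ ε + ω² / (4λ)` is sharpest at `λ = ω / (2√ε)`, where it reads
`t ε ≤ ω √ε`. -/
lemma le_div_sqrt_of_forall_mul_le {t ε ω : ℝ} (hε : 0 < ε) (hω : 0 < ω)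
    (h : ∀ lam > 0, t * ε ≤ lam * ε + ω ^ 2 / (4 * lam)) : t ≤ ω / √ε := by
  have hs : 0 < √ε := Real.sqrt_pos.mpr hε
  have hs2 : √ε ^ 2 = ε := Real.sq_sqrt hε.le
  have hopt : ω / (2 * √ε) * ε + ω ^ 2 / (4 * (ω / (2 * √ε))) = ω / √ε * ε := by
    field_simp
    rw [hs2]
    ring
  have := h (ω / (2 * √ε)) (by positivity)
  rw [hopt] at this
  exact le_of_mul_le_mul_right this hε

theorem stmt_8_general {X : Type*} [MetricSpace X]
    (n : ℕ) (hn : 0 < n) (xs : Fin n → X)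
    (S : Finset X) (hS : S.Nonempty) (hxs : ∀ i, xs i ∈ S)
    (ε : ℝ) (hε : 0 < ε)
    (ω₂ : ℝ) (hω₂ : 0 < ω₂)
    (ℓ : Fin n → X → ℝ)
    (hlip : ∀ i, ∀ u v : X, |ℓ i u - ℓ i v| ≤ ω₂ * dist u v)
    (B : ℝ → ℝ)
    (hB : ∀ lam, B lam =
      lam * ε + (1 / n) * ∑ i, S.sup' hS (fun x => ℓ i x - lam * dist x (xs i) ^ 2))
    (lamn : ℝ)
    (hmin : B lamn = ⨅ lam : Set.Ici (0 : ℝ), B lam.1) :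
    lamn ≤ ω₂ / Real.sqrt ε := by
  set C := 1 / (n : ℝ) * ∑ i, ℓ i (xs i)
  have lower : ∀ lam, lam * ε + C ≤ B lam := fun lam => by
    rw [hB]
    unfold C
    gcongr with i
    exact le_sup'_sub_mul_dist_sq hS (ℓ i) (hxs i) lam
  have upper : ∀ lam > 0, B lam ≤ lam * ε + C + ω₂ ^ 2 / (4 * lam) := fun lam hlam => by
    rw [hB, add_assoc, ← Fin.one_div_mul_sum_add_const hn.ne']
    gcongr with i
    exact sup'_sub_mul_dist_sq_le hS (fun x => (le_abs_self _).trans (hlip i x (xs i))) hlam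
  have minimal : ∀ lam, 0 ≤ lam → B lamn ≤ B lam :=
    fun lam => le_of_eq_ciInf_Ici (c := C)
      (fun μ hμ => by linarith [lower μ, mul_nonneg hμ hε.le]) hmin
  refine le_div_sqrt_of_forall_mul_le hε hω₂ fun lam hlam => ?_
  linarith [lower lamn, upper lam hlam, minimal lam hlam.le]

/-- Bound on the optimal dual variable (used at line eq:bounds in the proof of
Theorem 3.1): every minimizer over `[0, ∞)` of the restricted dual objective `B`
satisfies `λₙ ≤ ω₂ / √ε`. -/
theorem stmt_8 {X : Type*} [MetricSpace X]
    (n : ℕ) (hn : 0 < n) (xs : Fin n → X)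
    (S : Finset X) (hS : S.Nonempty) (hxs : ∀ i, xs i ∈ S)
    (ε : ℝ) (hε : 0 < ε)
    (ω₂ : ℝ) (hω₂ : 0 < ω₂)
    (ℓ : Fin n → X → ℝ)
    (hlip : ∀ i, ∀ u v : X, |ℓ i u - ℓ i v| ≤ ω₂ * dist u v)
    (B : ℝ → ℝ)
    (hB : ∀ lam, B lam =
      lam * ε + (1 / n) * ∑ i, S.sup' hS (fun x => ℓ i x - lam * dist x (xs i) ^ 2))
    (lamn : ℝ) (hlamn0 : 0 ≤ lamn)
    (hmin : B lamn = ⨅ lam : Set.Ici (0 : ℝ), B lam.1) :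
    lamn ≤ ω₂ / Real.sqrt ε :=
  stmt_8_general n hn xs S hS hxs ε hε ω₂ hω₂ ℓ hlip B hB lamn hmin
end

section
/- Let (X, d) be a metric space with d(x, y) ≤ D for all x, y ∈ X (D ≥ 0), let x_1, …, x_n ∈ X, let S ⊆ X be a nonempty finite set containing x_1, …, x_n, let ε > 0, and let ℓ_1, …, ℓ_n : X → ℝ each be ω₂-Lipschitz with respect to d (ω₂ > 0). Define A(λ) = λε + (1/n)·Σ_{i=1}^n sup_{x ∈ X} [ℓ_i(x) − λ·d(x, x_i)²] and B(λ) = λε + (1/n)·Σ_{i=1}^n max_{x ∈ S} [ℓ_i(x) − λ·d(x, x_i)²] for λ ≥ 0. Suppose λ_n ≥ 0 satisfies B(λ_n) = inf_{λ ≥ 0} B(λ); suppose for each i there exists T_i ∈ X attaining sup_{x ∈ X} [ℓ_i(x) − λ_n·d(x, x_i)²]; and suppose for each i there exists x_i* ∈ S with d(x_i*, T_i) ≤ r for some r ≥ 0. Then 0 ≤ inf_{λ ≥ 0} A(λ) − inf_{λ ≥ 0} B(λ) ≤ r·(ω₂ + 2·ω₂·D/√ε). -/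
/-!
Restricting the inner supremum to `S` can only lower the dual objective, so the gap is
nonnegative. For the upper bound, evaluate the unrestricted objective at the restricted
minimizer `λₙ`: each unrestricted supremum is attained at `Tᵢ`, and a point of `S` within `r`
of `Tᵢ` loses at most `ω₂ r` in loss and `λₙ · 2 D r` in penalty. Finally `λₙ ≤ ω₂ / √ε`:
for `λ` beyond this value every restricted maximizer lies within `ω₂ / λ` of its sample, so
increasing `λ` lowers the averaged maxima by less than it raises `λ ε`.
-/

open Finset

section PenalizedSup

variable {X : Type*} [PseudoMetricSpace X]

theorem sq_dist_sub_sq_dist_le {a b c : X} {D : ℝ} (ha : dist a c ≤ D) (hb : dist b c ≤ D) :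
    dist a c ^ 2 - dist b c ^ 2 ≤ 2 * D * dist a b := by
  have hab : dist a c - dist b c ≤ dist a b := (abs_le.1 (abs_dist_sub_le a b c)).2
  have hsum : 0 ≤ dist a c + dist b c := by positivity
  calc dist a c ^ 2 - dist b c ^ 2 = (dist a c + dist b c) * (dist a c - dist b c) := by ring
    _ ≤ (dist a c + dist b c) * dist a b := by gcongr
    _ ≤ 2 * D * dist a b := by gcongr; linarith

variable {ℓ : X → ℝ} {ω : ℝ}

theorem bddAbove_range_sub_mul_dist_sq (hlip : ∀ u v, ℓ u - ℓ v ≤ ω * dist u v) (hω : 0 ≤ ω)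
    {x₀ : X} {D : ℝ} (hdiam : ∀ x, dist x x₀ ≤ D) {lam : ℝ} (hlam : 0 ≤ lam) :
    BddAbove (Set.range fun x => ℓ x - lam * dist x x₀ ^ 2) := by
  refine ⟨ℓ x₀ + ω * D, ?_⟩
  rintro _ ⟨x, rfl⟩
  have hℓ : ℓ x - ℓ x₀ ≤ ω * D := (hlip x x₀).trans (by gcongr; exact hdiam x)
  have hpen : 0 ≤ lam * dist x x₀ ^ 2 := by positivity
  dsimp only
  linarith

theorem le_sup'_sub_mul_dist_sq {S : Finset X} (hS : S.Nonempty) {x₀ : X} (hx₀ : x₀ ∈ S)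
    (lam : ℝ) : ℓ x₀ ≤ S.sup' hS (fun x => ℓ x - lam * dist x x₀ ^ 2) :=
  le_sup'_of_le _ hx₀ (by simp)

theorem sq_dist_le_of_le_sub_mul_dist_sq (hlip : ∀ u v, ℓ u - ℓ v ≤ ω * dist u v)
    {x₀ y : X} {lam : ℝ} (hlam : 0 < lam) (hy : ℓ x₀ ≤ ℓ y - lam * dist y x₀ ^ 2) :
    dist y x₀ ^ 2 ≤ (ω / lam) ^ 2 := by
  set t := lam * dist y x₀
  have ht : 0 ≤ t := by positivity
  have hωt : t ^ 2 ≤ ω * t := by nlinarith [hlip y x₀]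
  have htω : t ^ 2 ≤ ω ^ 2 := by nlinarith [sq_nonneg (ω - t)]
  rw [div_pow, le_div_iff₀ (by positivity)]
  linarith [mul_pow lam (dist y x₀) 2]

theorem sup'_sub_mul_dist_sq_le_add (hlip : ∀ u v, ℓ u - ℓ v ≤ ω * dist u v)
    {S : Finset X} (hS : S.Nonempty) {x₀ : X} (hx₀ : x₀ ∈ S) {lam lam' : ℝ}
    (hlam : 0 < lam) (hle : lam ≤ lam') :
    S.sup' hS (fun x => ℓ x - lam * dist x x₀ ^ 2) ≤
      S.sup' hS (fun x => ℓ x - lam' * dist x x₀ ^ 2) + (lam' - lam) * (ω / lam) ^ 2 := by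
  obtain ⟨y, hyS, hy⟩ := exists_mem_eq_sup' hS (fun x => ℓ x - lam * dist x x₀ ^ 2)
  have hdist : dist y x₀ ^ 2 ≤ (ω / lam) ^ 2 :=
    sq_dist_le_of_le_sub_mul_dist_sq hlip hlam (hy ▸ le_sup'_sub_mul_dist_sq hS hx₀ lam)
  rw [hy]
  calc ℓ y - lam * dist y x₀ ^ 2
        = (ℓ y - lam' * dist y x₀ ^ 2) + (lam' - lam) * dist y x₀ ^ 2 := by ring
    _ ≤ S.sup' hS (fun x => ℓ x - lam' * dist x x₀ ^ 2) + (lam' - lam) * (ω / lam) ^ 2 := by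
        gcongr
        exact le_sup' (fun x => ℓ x - lam' * dist x x₀ ^ 2) hyS

theorem sub_mul_dist_sq_le_sup'_add (hlip : ∀ u v, ℓ u - ℓ v ≤ ω * dist u v) (hω : 0 ≤ ω)
    {S : Finset X} (hS : S.Nonempty) {x₀ y z : X} (hz : z ∈ S) {D r : ℝ}
    (hdiam : ∀ x, dist x x₀ ≤ D) (hzy : dist z y ≤ r) {lam : ℝ} (hlam : 0 ≤ lam) :
    ℓ y - lam * dist y x₀ ^ 2 ≤
      S.sup' hS (fun x => ℓ x - lam * dist x x₀ ^ 2) + r * (ω + 2 * lam * D) := by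
  have hℓ : ℓ y - ℓ z ≤ ω * r := (hlip y z).trans (by rw [dist_comm]; gcongr)
  have hD : 0 ≤ D := by simpa using hdiam x₀
  have hsq : lam * (dist z x₀ ^ 2 - dist y x₀ ^ 2) ≤ lam * (2 * D * r) := by
    gcongr
    exact (sq_dist_sub_sq_dist_le (hdiam z) (hdiam y)).trans (by gcongr)
  have hz' := le_sup' (fun x => ℓ x - lam * dist x x₀ ^ 2) hz
  linarith

end PenalizedSup

theorem mean_le_mean_add {n : ℕ} (hn : 0 < n) {a b : Fin n → ℝ} {c : ℝ}
    (h : ∀ i, a i ≤ b i + c) : (1 / n) * ∑ i, a i ≤ (1 / n) * ∑ i, b i + c := by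
  have hsum : ∑ i, a i ≤ ∑ i, b i + n * c := by
    simpa [sum_add_distrib] using sum_le_sum fun i (_ : i ∈ univ) => h i
  have hn' : (0 : ℝ) < n := by exact_mod_cast hn
  calc (1 / n) * ∑ i, a i ≤ (1 / n) * (∑ i, b i + n * c) := by gcongr
    _ = (1 / n) * ∑ i, b i + c := by field_simp

theorem le_div_sqrt_of_isMinOn {X : Type*} [PseudoMetricSpace X] {n : ℕ} (hn : 0 < n)
    {S : Finset X} (hS : S.Nonempty) {xs : Fin n → X} (hxs : ∀ i, xs i ∈ S)
    {ℓ : Fin n → X → ℝ} {ω ε : ℝ} (hω : 0 ≤ ω) (hε : 0 < ε)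
    (hlip : ∀ i u v, ℓ i u - ℓ i v ≤ ω * dist u v) {B : ℝ → ℝ}
    (hB : ∀ lam, B lam =
      lam * ε + (1 / n) * ∑ i, S.sup' hS (fun x => ℓ i x - lam * dist x (xs i) ^ 2))
    {lamn : ℝ} (hmin : IsMinOn B (Set.Ici 0) lamn) : lamn ≤ ω / Real.sqrt ε := by
  refine le_of_forall_lt_imp_le_of_dense fun lam hlt => ?_
  rcases le_or_gt lam 0 with hlam | hlam
  · exact hlam.trans (by positivity)
  have hstep : B lam ≤ B lamn + (lamn - lam) * ((ω / lam) ^ 2 - ε) := by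
    have := mean_le_mean_add hn fun i =>
      sup'_sub_mul_dist_sq_le_add (hlip i) hS (hxs i) hlam hlt.le
    rw [hB, hB]
    linarith
  have hε_le : ε ≤ (ω / lam) ^ 2 := by nlinarith [isMinOn_iff.1 hmin lam hlam.le]
  have hsqrt : Real.sqrt ε ≤ ω / lam := (Real.sqrt_le_left (by positivity)).2 hε_le
  rw [le_div_iff₀ (Real.sqrt_pos.2 hε)]
  calc lam * Real.sqrt ε ≤ lam * (ω / lam) := by gcongr
    _ = ω := by field_simp

theorem ciInf_sub_ciInf_mem_Icc {ι : Type*} [Nonempty ι] {f g : ι → ℝ} {c : ℝ}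
    (hg : BddBelow (Set.range g)) (hgf : ∀ i, g i ≤ f i) (i₀ : ι) (hi₀ : g i₀ = ⨅ i, g i)
    (hc : f i₀ ≤ g i₀ + c) : (⨅ i, f i) - (⨅ i, g i) ∈ Set.Icc 0 c := by
  obtain ⟨b, hb⟩ := hg
  have hf : BddBelow (Set.range f) :=
    ⟨b, Set.forall_mem_range.2 fun i => (hb ⟨i, rfl⟩).trans (hgf i)⟩
  constructor
  · linarith [ciInf_mono ⟨b, hb⟩ hgf]
  · linarith [ciInf_le hf i₀]

/-- Combined deterministic bound of Theorem 3.1 (th.stats): the gap between the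
dual value of the unrestricted distributionally robust loss and that of the
restricted loss is between `0` and `r (ω₂ + 2 ω₂ D / √ε)`. -/
theorem stmt_9 {X : Type*} [MetricSpace X] (D : ℝ) (hD : 0 ≤ D)
    (hdiam : ∀ x y : X, dist x y ≤ D)
    (n : ℕ) (hn : 0 < n) (xs : Fin n → X)
    (S : Finset X) (hS : S.Nonempty) (hxs : ∀ i, xs i ∈ S)
    (ε : ℝ) (hε : 0 < ε)
    (ω₂ : ℝ) (hω₂ : 0 < ω₂) (ℓ : Fin n → X → ℝ)
    (hlip : ∀ i, ∀ u v : X, |ℓ i u - ℓ i v| ≤ ω₂ * dist u v)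
    (A B : ℝ → ℝ)
    (hA : ∀ lam, A lam =
      lam * ε + (1 / n) * ∑ i, ⨆ x : X, (ℓ i x - lam * dist x (xs i) ^ 2))
    (hB : ∀ lam, B lam =
      lam * ε + (1 / n) * ∑ i, S.sup' hS (fun x => ℓ i x - lam * dist x (xs i) ^ 2))
    (lamn : ℝ) (hlamn0 : 0 ≤ lamn)
    (hlamn : B lamn = ⨅ lam : Set.Ici (0 : ℝ), B lam.1)
    (T : Fin n → X)
    (hT : ∀ i, (⨆ x : X, (ℓ i x - lamn * dist x (xs i) ^ 2)) =
      ℓ i (T i) - lamn * dist (T i) (xs i) ^ 2)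
    (r : ℝ) (hr : 0 ≤ r)
    (hclose : ∀ i, ∃ xstar ∈ S, dist xstar (T i) ≤ r) :
    0 ≤ (⨅ lam : Set.Ici (0 : ℝ), A lam.1) - (⨅ lam : Set.Ici (0 : ℝ), B lam.1) ∧
      (⨅ lam : Set.Ici (0 : ℝ), A lam.1) - (⨅ lam : Set.Ici (0 : ℝ), B lam.1) ≤
        r * (ω₂ + 2 * ω₂ * D / Real.sqrt ε) := by
  have hlip' : ∀ i u v, ℓ i u - ℓ i v ≤ ω₂ * dist u v := fun i u v => (abs_le.1 (hlip i u v)).2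
  have hBA : ∀ lam : Set.Ici (0 : ℝ), B lam.1 ≤ A lam.1 := fun ⟨lam, hlam⟩ => by
    rw [hA, hB]
    gcongr with i
    exact sup'_le _ _ fun x _ =>
      le_ciSup (bddAbove_range_sub_mul_dist_sq (hlip' i) hω₂.le (hdiam · (xs i)) hlam) x
  have hBdd : BddBelow (Set.range fun lam : Set.Ici (0 : ℝ) => B lam.1) := by
    refine ⟨(1 / n) * ∑ i, ℓ i (xs i), Set.forall_mem_range.2 fun ⟨lam, hlam⟩ => ?_⟩
    rw [hB]
    have hmean : (1 / n) * ∑ i, ℓ i (xs i) ≤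
        (1 / n) * ∑ i, S.sup' hS (fun x => ℓ i x - lam * dist x (xs i) ^ 2) := by
      gcongr with i
      exact le_sup'_sub_mul_dist_sq hS (hxs i) lam
    linarith [mul_nonneg (Set.mem_Ici.1 hlam) hε.le]
  have hlamn_le : lamn ≤ ω₂ / Real.sqrt ε :=
    le_div_sqrt_of_isMinOn hn hS hxs hω₂.le hε hlip' hB <|
      isMinOn_iff.2 fun lam hlam => hlamn ▸ ciInf_le hBdd ⟨lam, hlam⟩
  have hgap : A lamn ≤ B lamn + r * (ω₂ + 2 * lamn * D) := by
    rw [hA, hB, add_assoc]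
    gcongr
    refine mean_le_mean_add hn fun i => ?_
    obtain ⟨z, hz, hzT⟩ := hclose i
    rw [hT i]
    exact sub_mul_dist_sq_le_sup'_add (hlip' i) hω₂.le hS hz (hdiam · (xs i)) hzT hlamn0
  refine ciInf_sub_ciInf_mem_Icc hBdd hBA ⟨lamn, hlamn0⟩ hlamn (hgap.trans ?_)
  have hpenalty : 2 * lamn * D ≤ 2 * ω₂ * D / Real.sqrt ε := by
    rw [mul_div_right_comm, mul_div_assoc]
    gcongr
  gcongr
end

section
/- Let n ≥ 1, let R, C be real n × n matrices with C_{ij} ≥ 0 for all i, j and C_{jj} = 0 for all j, let ε ≥ 0, and define Γ = {Π ∈ ℝ^{n×n} : Π_{ij} ≥ 0 for all i, j; Σ_{i,j} C_{ij}·Π_{ij} ≤ ε; and Σ_i Π_{ij} = 1/n for every column j}. Then Γ is nonempty and compact, the supremum sup_{Π ∈ Γ} Σ_{i,j} R_{ij}·Π_{ij} is attained, and strong duality holds: sup_{Π ∈ Γ} Σ_{i,j} R_{ij}·Π_{ij} = inf_{η ≥ 0} [ε·η + (1/n)·Σ_{j=1}^n max_{1 ≤ i ≤ n} (R_{ij}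 − η·C_{ij})]. -/
/-- The universe of `Fin n` is a nonempty finset when `0 < n`. -/
theorem finUnivNonempty {n : ℕ} (hn : 0 < n) :
    (Finset.univ : Finset (Fin n)).Nonempty :=
  ⟨⟨0, hn⟩, Finset.mem_univ _⟩

private noncomputable def phiF {n : ℕ} (hn : 0 < n) (R C : Fin n → Fin n → ℝ)
    (η : ℝ) (j : Fin n) : ℝ :=
  Finset.univ.sup' (finUnivNonempty hn) (fun i => R i j - η * C i j)

private noncomputable def GF {n : ℕ} (hn : 0 < n) (R C : Fin n → Fin n → ℝ)
    (ε η : ℝ) : ℝ :=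
  ε * η + (1 / n) * ∑ j, phiF hn R C η j

private lemma weak_dual {n : ℕ} (hn : 0 < n) (R C : Fin n → Fin n → ℝ)
    (ε : ℝ) (Q : Fin n → Fin n → ℝ)
    (hQ0 : ∀ i j, 0 ≤ Q i j) (hQc : (∑ i, ∑ j, C i j * Q i j) ≤ ε)
    (hQs : ∀ j, ∑ i, Q i j = 1 / n) (η : ℝ) (hη : 0 ≤ η) :
    ∑ i, ∑ j, R i j * Q i j ≤ GF hn R C ε η := by
  have h1 : ∑ i, ∑ j, R i j * Q i j
      = (∑ i, ∑ j, (R i j - η * C i j) * Q i j) + η * ∑ i, ∑ j, C i j * Q i j := by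
    rw [Finset.mul_sum, ← Finset.sum_add_distrib]
    refine Finset.sum_congr rfl fun i _ => ?_
    rw [Finset.mul_sum, ← Finset.sum_add_distrib]
    exact Finset.sum_congr rfl fun j _ => by ring
  have h2 : ∑ i, ∑ j, (R i j - η * C i j) * Q i j ≤ (1/(n:ℝ)) * ∑ j, phiF hn R C η j := by
    rw [Finset.sum_comm, Finset.mul_sum]
    refine Finset.sum_le_sum fun j _ => ?_
    calc ∑ i, (R i j - η * C i j) * Q i j ≤ ∑ i, phiF hn R C η j * Q i j :=
          Finset.sum_le_sum fun i _ =>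
            mul_le_mul_of_nonneg_right
              (Finset.le_sup' (fun i => R i j - η * C i j) (Finset.mem_univ i)) (hQ0 i j)
      _ = phiF hn R C η j * ∑ i, Q i j := by rw [Finset.mul_sum]
      _ = (1/(n:ℝ)) * phiF hn R C η j := by rw [hQs j]; ring
  have h3 : η * ∑ i, ∑ j, C i j * Q i j ≤ ε * η := by
    rw [mul_comm ε η]; exact mul_le_mul_of_nonneg_left hQc hη
  rw [h1]; unfold GF; linarith

private lemma GF_continuous {n : ℕ} (hn : 0 < n) (R C : Fin n → Fin n → ℝ) (ε : ℝ) :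
    Continuous (GF hn R C ε) := by
  unfold GF phiF
  apply Continuous.add
  · exact continuous_const.mul continuous_id
  · apply continuous_const.mul
    apply continuous_finset_sum
    intro j _
    exact Continuous.finset_sup'_apply (finUnivNonempty hn)
      (fun i _ => continuous_const.sub (continuous_id.mul continuous_const))

private lemma exists_min {n : ℕ} (hn : 0 < n) (R C : Fin n → Fin n → ℝ)
    (hC0 : ∀ i j, 0 ≤ C i j) (hCd : ∀ j, C j j = 0) (ε : ℝ) (hε : 0 ≤ ε) :
    ∃ η0 : ℝ, 0 ≤ η0 ∧ ∀ η, 0 ≤ η → GF hn R C ε η0 ≤ GF hn R C ε η := by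
  classical
  set Z : Fin n → Finset (Fin n) := fun j => Finset.univ.filter (fun i => C i j = 0) with hZ
  have hZne : ∀ j, (Z j).Nonempty := fun j => ⟨j, by simp [hZ, hCd j]⟩
  set Aj : Fin n → ℝ := fun j => (Z j).sup' (hZne j) (fun i => R i j) with hAj
  set K : ℝ := ∑ p : Fin n × Fin n,
      max 0 (if C p.1 p.2 = 0 then 0 else (R p.1 p.2 - Aj p.2) / C p.1 p.2) with hK
  have hK0 : 0 ≤ K := Finset.sum_nonneg fun p _ => le_max_left _ _
  have hKge : ∀ i j, C i j ≠ 0 → (R i j - Aj j) / C i j ≤ K := by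
    intro i j hij
    have h1 : (R i j - Aj j) / C i j
        ≤ max 0 (if C i j = 0 then 0 else (R i j - Aj j) / C i j) := by
      rw [if_neg hij]; exact le_max_right _ _
    refine h1.trans ?_
    exact Finset.single_le_sum
      (f := fun p : Fin n × Fin n =>
        max 0 (if C p.1 p.2 = 0 then 0 else (R p.1 p.2 - Aj p.2) / C p.1 p.2))
      (fun p _ => le_max_left _ _) (Finset.mem_univ ((i, j) : Fin n × Fin n))
  have hphiK : ∀ η, K ≤ η → ∀ j, phiF hn R C η j = Aj j := by
    intro η hη j
    apply le_antisymm
    · apply Finset.sup'_le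
      intro i _
      by_cases hc : C i j = 0
      · rw [hc, mul_zero, sub_zero]
        exact Finset.le_sup' (fun i => R i j) (by simp [hZ, hc])
      · have hcpos : 0 < C i j := lt_of_le_of_ne (hC0 i j) (Ne.symm hc)
        have h2 := hKge i j hc
        rw [div_le_iff₀ hcpos] at h2
        have h3 : K * C i j ≤ η * C i j := mul_le_mul_of_nonneg_right hη hcpos.le
        linarith
    · apply Finset.sup'_le
      intro i hi
      have hc : C i j = 0 := (Finset.mem_filter.mp hi).2
      have h4 := Finset.le_sup' (fun i => R i j - η * C i j) (Finset.mem_univ i)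
      calc R i j = R i j - η * C i j := by rw [hc]; ring
        _ ≤ phiF hn R C η j := h4
  obtain ⟨η0, hη0mem, hminOn⟩ := isCompact_Icc.exists_isMinOn (α := ℝ)
    ⟨0, Set.mem_Icc.mpr ⟨le_refl 0, hK0⟩⟩ ((GF_continuous hn R C ε).continuousOn (s := Set.Icc 0 K))
  refine ⟨η0, hη0mem.1, fun η hη => ?_⟩
  by_cases hcase : η ≤ K
  · exact hminOn ⟨hη, hcase⟩
  · push_neg at hcase
    have h1 : GF hn R C ε η = ε * η + (1/(n:ℝ)) * ∑ j, Aj j := by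
      unfold GF
      rw [Finset.sum_congr rfl (fun j _ => hphiK η hcase.le j)]
    have h2 : GF hn R C ε K = ε * K + (1/(n:ℝ)) * ∑ j, Aj j := by
      unfold GF
      rw [Finset.sum_congr rfl (fun j _ => hphiK K le_rfl j)]
    have h3 : GF hn R C ε K ≤ GF hn R C ε η := by
      rw [h1, h2]
      have := mul_le_mul_of_nonneg_left hcase.le hε
      linarith
    exact (hminOn (Set.mem_Icc.mpr ⟨hK0, le_rfl⟩)).trans h3


open Filter Topology in
private lemma strong_dual {n : ℕ} (hn : 0 < n) (R C : Fin n → Fin n → ℝ)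
    (hC0 : ∀ i j, 0 ≤ C i j) (hCd : ∀ j, C j j = 0) (ε : ℝ) (hε : 0 ≤ ε) :
    ∃ Q : Fin n → Fin n → ℝ, (∀ i j, 0 ≤ Q i j) ∧ (∑ i, ∑ j, C i j * Q i j) ≤ ε ∧
      (∀ j, ∑ i, Q i j = 1 / n) ∧ ∃ η : ℝ, 0 ≤ η ∧
      ∑ i, ∑ j, R i j * Q i j = GF hn R C ε η := by
  classical
  obtain ⟨η0, hη00, hmin⟩ := exists_min hn R C hC0 hCd ε hε
  set φ : Fin n → ℝ := phiF hn R C η0 with hφdef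
  set M : Fin n → Finset (Fin n) :=
    fun j => Finset.univ.filter (fun i => R i j - η0 * C i j = φ j) with hM
  have hMne : ∀ j, (M j).Nonempty := by
    intro j
    obtain ⟨i, _, hi⟩ := Finset.exists_mem_eq_sup' (finUnivNonempty hn)
      (fun i => R i j - η0 * C i j)
    refine ⟨i, Finset.mem_filter.mpr ⟨Finset.mem_univ _, ?_⟩⟩
    rw [hφdef]; exact hi.symm
  have hMeq : ∀ j, ∀ i ∈ M j, R i j - η0 * C i j = φ j :=
    fun j i hi => (Finset.mem_filter.mp hi).2
  have hMle : ∀ j i, R i j - η0 * C i j ≤ φ j :=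
    fun j i => Finset.le_sup' (fun i => R i j - η0 * C i j) (Finset.mem_univ i)
  set a : Fin n → ℝ := fun j => (M j).inf' (hMne j) (fun i => C i j) with ha
  set b : Fin n → ℝ := fun j => (M j).sup' (hMne j) (fun i => C i j) with hb
  have himin' : ∀ j, ∃ i, i ∈ M j ∧ C i j = a j := by
    intro j; obtain ⟨i, hi, h⟩ := Finset.exists_mem_eq_inf' (hMne j) (fun i => C i j)
    exact ⟨i, hi, h.symm⟩
  choose imin himinM himinC using himin'
  have himax' : ∀ j, ∃ i, i ∈ M j ∧ C i j = b j := by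
    intro j; obtain ⟨i, hi, h⟩ := Finset.exists_mem_eq_sup' (hMne j) (fun i => C i j)
    exact ⟨i, hi, h.symm⟩
  choose imax himaxM himaxC using himax'
  have haC : ∀ j i, i ∈ M j → a j ≤ C i j := fun j i hi => by
    rw [ha]; exact Finset.inf'_le (fun i => C i j) hi
  have hbC : ∀ j i, i ∈ M j → C i j ≤ b j := fun j i hi => by
    rw [hb]; exact Finset.le_sup' (fun i => C i j) hi
  have hab : ∀ j, a j ≤ b j := fun j => by
    rw [← himinC j]; exact hbC j _ (himinM j)
  set A : ℝ := (1/(n:ℝ)) * ∑ j, a j with hA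
  set B : ℝ := (1/(n:ℝ)) * ∑ j, b j with hBdef
  have hn' : (0:ℝ) < n := by exact_mod_cast hn
  have h1n : (0:ℝ) ≤ 1/(n:ℝ) := by positivity
  -- right derivative at η0 is nonnegative : A ≤ ε
  have hAε : A ≤ ε := by
    have hev : ∀ᶠ δ in 𝓝[>] (0:ℝ), ∀ i j, R i j - (η0 + δ) * C i j ≤ φ j - δ * a j := by
      rw [Filter.eventually_all]
      intro i
      rw [Filter.eventually_all]
      intro j
      by_cases hi : i ∈ M j
      · have h1 : a j ≤ C i j := haC j i hi
        have h2 := hMeq j i hi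
        filter_upwards [self_mem_nhdsWithin] with δ (hδ : (0:ℝ) < δ)
        nlinarith
      · have hlt : R i j - η0 * C i j < φ j := by
          refine lt_of_le_of_ne (hMle j i) ?_
          intro h; exact hi (Finset.mem_filter.mpr ⟨Finset.mem_univ _, h⟩)
        have hcont : ContinuousAt
            (fun δ : ℝ => (R i j - (η0 + δ) * C i j) - (φ j - δ * a j)) 0 := by fun_prop
        have h0 : (R i j - (η0 + 0) * C i j) - (φ j - 0 * a j) < 0 := by ring_nf; linarith
        have hev2 := (Filter.Tendsto.eventually_lt_const h0 hcont).filter_mono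
          (nhdsWithin_le_nhds (s := Set.Ioi (0:ℝ)))
        filter_upwards [hev2] with δ hδ
        linarith
    obtain ⟨δ, hδ1, hδpos⟩ := (hev.and self_mem_nhdsWithin).exists
    have hδ0 : (0:ℝ) < δ := hδpos
    have hsup : ∀ j, phiF hn R C (η0+δ) j ≤ φ j - δ * a j := by
      intro j
      apply Finset.sup'_le
      intro i _
      exact hδ1 i j
    have hGle : GF hn R C ε (η0+δ) ≤ GF hn R C ε η0 + δ * (ε - A) := by
      have hsum : ∑ j, phiF hn R C (η0+δ) j ≤ ∑ j, φ j - δ * ∑ j, a j := by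
        calc ∑ j, phiF hn R C (η0+δ) j ≤ ∑ j, (φ j - δ * a j) :=
              Finset.sum_le_sum fun j _ => hsup j
          _ = ∑ j, φ j - δ * ∑ j, a j := by rw [Finset.sum_sub_distrib, Finset.mul_sum]
      have h5 := mul_le_mul_of_nonneg_left hsum h1n
      have h6 : (1/(n:ℝ)) * (∑ j, φ j - δ * ∑ j, a j)
          = (1/(n:ℝ)) * ∑ j, φ j - δ * A := by rw [hA]; ring
      simp only [GF, ← hφdef]
      rw [h6] at h5
      linarith
    have h7 := hmin (η0+δ) (by linarith)
    by_contra hcon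
    push_neg at hcon
    nlinarith
  -- left derivative at η0 is nonpositive (when η0 > 0) : ε ≤ B
  have hBε : 0 < η0 → ε ≤ B := by
    intro hη0pos
    have hev : ∀ᶠ δ in 𝓝[>] (0:ℝ), ∀ i j, R i j - (η0 - δ) * C i j ≤ φ j + δ * b j := by
      rw [Filter.eventually_all]
      intro i
      rw [Filter.eventually_all]
      intro j
      by_cases hi : i ∈ M j
      · have h1 : C i j ≤ b j := hbC j i hi
        have h2 := hMeq j i hi
        filter_upwards [self_mem_nhdsWithin] with δ (hδ : (0:ℝ) < δ)
        nlinarith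
      · have hlt : R i j - η0 * C i j < φ j := by
          refine lt_of_le_of_ne (hMle j i) ?_
          intro h; exact hi (Finset.mem_filter.mpr ⟨Finset.mem_univ _, h⟩)
        have hcont : ContinuousAt
            (fun δ : ℝ => (R i j - (η0 - δ) * C i j) - (φ j + δ * b j)) 0 := by fun_prop
        have h0 : (R i j - (η0 - 0) * C i j) - (φ j + 0 * b j) < 0 := by ring_nf; linarith
        have hev2 := (Filter.Tendsto.eventually_lt_const h0 hcont).filter_mono
          (nhdsWithin_le_nhds (s := Set.Ioi (0:ℝ)))
        filter_upwards [hev2] with δ hδ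
        linarith
    have hevlt : ∀ᶠ δ in 𝓝[>] (0:ℝ), δ < η0 :=
      Filter.eventually_of_mem (nhdsWithin_le_nhds (Iio_mem_nhds hη0pos)) (fun δ hδ => hδ)
    obtain ⟨δ, ⟨hδ1, hδlt⟩, hδpos⟩ := ((hev.and hevlt).and self_mem_nhdsWithin).exists
    have hδ0 : (0:ℝ) < δ := hδpos
    have hsup : ∀ j, phiF hn R C (η0-δ) j ≤ φ j + δ * b j := by
      intro j
      apply Finset.sup'_le
      intro i _
      exact hδ1 i j
    have hGle : GF hn R C ε (η0-δ) ≤ GF hn R C ε η0 - δ * (ε - B) := by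
      have hsum : ∑ j, phiF hn R C (η0-δ) j ≤ ∑ j, φ j + δ * ∑ j, b j := by
        calc ∑ j, phiF hn R C (η0-δ) j ≤ ∑ j, (φ j + δ * b j) :=
              Finset.sum_le_sum fun j _ => hsup j
          _ = ∑ j, φ j + δ * ∑ j, b j := by rw [Finset.sum_add_distrib, Finset.mul_sum]
      have h5 := mul_le_mul_of_nonneg_left hsum h1n
      have h6 : (1/(n:ℝ)) * (∑ j, φ j + δ * ∑ j, b j)
          = (1/(n:ℝ)) * ∑ j, φ j + δ * B := by rw [hBdef]; ring
      simp only [GF, ← hφdef]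
      rw [h6] at h5
      linarith
    have h7 := hmin (η0-δ) (by linarith)
    by_contra hcon
    push_neg at hcon
    nlinarith
  have hABle : A ≤ B :=
    mul_le_mul_of_nonneg_left (Finset.sum_le_sum fun j _ => hab j) h1n
  obtain ⟨lam, hl0, hl1, hcost, hobj⟩ :
      ∃ lam : ℝ, 0 ≤ lam ∧ lam ≤ 1 ∧ (1-lam)*A + lam*B ≤ ε ∧
        η0 * ((1-lam)*A + lam*B) = η0 * ε := by
    rcases eq_or_lt_of_le hη00 with hz | hpos
    · exact ⟨0, le_refl 0, zero_le_one, by simpa using hAε, by rw [← hz]; ring⟩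
    · have hB := hBε hpos
      rcases eq_or_lt_of_le hABle with hAB | hAB
      · have hAeq : A = ε := le_antisymm hAε (by rw [hAB]; exact hB)
        refine ⟨0, le_refl 0, zero_le_one, by simpa using hAε, ?_⟩
        rw [hAeq]; ring
      · have key : ∀ x y e : ℝ, x < y → (1 - (e-x)/(y-x))*x + (e-x)/(y-x)*y = e := by
          intro x y e h
          have hne : y - x ≠ 0 := ne_of_gt (by linarith)
          field_simp
          ring
        refine ⟨(ε - A)/(B - A), div_nonneg (by linarith) (by linarith),
          (div_le_one (by linarith)).mpr (by linarith), le_of_eq (key A B ε hAB),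
          by rw [key A B ε hAB]⟩
  set Q : Fin n → Fin n → ℝ := fun i j =>
    ((if i = imin j then (1-lam) else 0) + (if i = imax j then lam else 0)) * (1/(n:ℝ))
    with hQ
  have hQcol : ∀ j, ∑ i, Q i j = 1 / (n:ℝ) := by
    intro j
    simp only [hQ]
    rw [← Finset.sum_mul, Finset.sum_add_distrib, Finset.sum_ite_eq', Finset.sum_ite_eq']
    simp only [Finset.mem_univ, if_true]
    ring
  refine ⟨Q, ?_, ?_, fun j => hQcol j, η0, hη00, ?_⟩
  · intro i j
    apply mul_nonneg _ h1n
    apply add_nonneg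
    · split_ifs <;> linarith
    · split_ifs <;> linarith
  · -- cost constraint
    have hterm : ∀ j i, C i j * Q i j =
        ((if i = imin j then C i j * (1-lam) else 0)
          + (if i = imax j then C i j * lam else 0)) * (1/(n:ℝ)) := by
      intro j i; simp only [hQ]; split_ifs <;> ring
    rw [Finset.sum_comm]
    have hcol : ∀ j, ∑ i, C i j * Q i j = (a j * (1-lam) + b j * lam) * (1/(n:ℝ)) := by
      intro j
      rw [Finset.sum_congr rfl (fun i _ => hterm j i),
        ← Finset.sum_mul, Finset.sum_add_distrib, Finset.sum_ite_eq', Finset.sum_ite_eq']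
      simp only [Finset.mem_univ, if_true]
      rw [himinC j, himaxC j]
    rw [Finset.sum_congr rfl (fun j _ => hcol j)]
    have hxx : ∑ j, (a j * (1-lam) + b j * lam) * (1/(n:ℝ)) = (1-lam)*A + lam*B := by
      calc ∑ j, (a j * (1-lam) + b j * lam) * (1/(n:ℝ))
          = ∑ j, (a j * ((1-lam) * (1/(n:ℝ))) + b j * (lam * (1/(n:ℝ)))) :=
            Finset.sum_congr rfl fun j _ => by ring
        _ = (∑ j, a j) * ((1-lam) * (1/(n:ℝ))) + (∑ j, b j) * (lam * (1/(n:ℝ))) := by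
            rw [Finset.sum_add_distrib, ← Finset.sum_mul, ← Finset.sum_mul]
        _ = (1-lam)*A + lam*B := by rw [hA, hBdef]; ring
    rw [hxx]
    exact hcost
  · -- objective value equals dual value at η0
    have hRimin : ∀ j, R (imin j) j = φ j + η0 * a j := by
      intro j
      have h1 := hMeq j (imin j) (himinM j)
      rw [← himinC j]
      linarith
    have hRimax : ∀ j, R (imax j) j = φ j + η0 * b j := by
      intro j
      have h1 := hMeq j (imax j) (himaxM j)
      rw [← himaxC j]
      linarith
    have hterm : ∀ j i, R i j * Q i j =
        ((if i = imin j then R i j * (1-lam) else 0)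
          + (if i = imax j then R i j * lam else 0)) * (1/(n:ℝ)) := by
      intro j i; simp only [hQ]; split_ifs <;> ring
    rw [Finset.sum_comm]
    have hcol : ∀ j, ∑ i, R i j * Q i j
        = ((φ j + η0 * a j) * (1-lam) + (φ j + η0 * b j) * lam) * (1/(n:ℝ)) := by
      intro j
      rw [Finset.sum_congr rfl (fun i _ => hterm j i),
        ← Finset.sum_mul, Finset.sum_add_distrib, Finset.sum_ite_eq', Finset.sum_ite_eq']
      simp only [Finset.mem_univ, if_true]
      rw [hRimin j, hRimax j]
    rw [Finset.sum_congr rfl (fun j _ => hcol j)]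
    have hexp : ∑ j, ((φ j + η0 * a j) * (1-lam) + (φ j + η0 * b j) * lam) * (1/(n:ℝ))
        = (1/(n:ℝ)) * ∑ j, φ j + η0 * ((1-lam)*A + lam*B) := by
      calc ∑ j, ((φ j + η0 * a j) * (1-lam) + (φ j + η0 * b j) * lam) * (1/(n:ℝ))
          = ∑ j, (φ j * (1/(n:ℝ)) + (a j * (η0 * (1-lam) * (1/(n:ℝ)))
              + b j * (η0 * lam * (1/(n:ℝ))))) :=
            Finset.sum_congr rfl fun j _ => by ring
        _ = (∑ j, φ j) * (1/(n:ℝ)) + ((∑ j, a j) * (η0 * (1-lam) * (1/(n:ℝ)))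
              + (∑ j, b j) * (η0 * lam * (1/(n:ℝ)))) := by
            rw [Finset.sum_add_distrib, Finset.sum_add_distrib,
              ← Finset.sum_mul, ← Finset.sum_mul, ← Finset.sum_mul]
        _ = (1/(n:ℝ)) * ∑ j, φ j + η0 * ((1-lam)*A + lam*B) := by rw [hA, hBdef]; ring
    rw [hexp, hobj]
    simp only [GF, ← hφdef]
    ring

/-- Strong duality for the linear program (eq:pistar) computing the worst-case
distribution of the restricted adversarial loss: the feasible set `Γ` is nonempty
and compact, the supremum of `⟨R, Π⟩` over `Γ` is attained, and it equals the
optimal value of the one-dimensional dual problem (eq:dualdef, eq:dualobj). -/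
theorem stmt_12 (n : ℕ) (hn : 0 < n) (R C : Fin n → Fin n → ℝ)
    (hC0 : ∀ i j, 0 ≤ C i j) (hCd : ∀ j, C j j = 0)
    (ε : ℝ) (hε : 0 ≤ ε)
    (Γ : Set (Fin n → Fin n → ℝ))
    (hΓ : Γ = {Q : Fin n → Fin n → ℝ | (∀ i j, 0 ≤ Q i j) ∧ (∑ i, ∑ j, C i j * Q i j) ≤ ε ∧
      ∀ j, ∑ i, Q i j = 1 / n}) :
    Γ.Nonempty ∧ IsCompact Γ ∧
      (∃ P ∈ Γ, ∀ Q ∈ Γ, ∑ i, ∑ j, R i j * Q i j ≤ ∑ i, ∑ j, R i j * P i j) ∧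
      sSup ((fun Q => ∑ i, ∑ j, R i j * Q i j) '' Γ) =
        ⨅ η : Set.Ici (0 : ℝ),
          (ε * η.1 + (1 / n) * ∑ j, Finset.univ.sup' (finUnivNonempty hn)
            (fun i => R i j - η.1 * C i j)) := by
  classical
  have hn' : (0:ℝ) < n := by exact_mod_cast hn
  have h1n : (0:ℝ) ≤ 1/(n:ℝ) := by positivity
  set Q0 : Fin n → Fin n → ℝ := fun i j => if i = j then 1/(n:ℝ) else 0 with hQ0def
  have hQ0mem : Q0 ∈ Γ := by
    rw [hΓ]
    refine ⟨fun i j => by simp only [hQ0def]; split_ifs <;> positivity, ?_, ?_⟩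
    · have hc : ∑ i, ∑ j, C i j * Q0 i j = 0 := by
        simp [hQ0def, mul_ite, mul_zero, Finset.sum_ite_eq, hCd]
      rw [hc]; exact hε
    · intro j
      simp [hQ0def, Finset.sum_ite_eq']
  have hΓne : Γ.Nonempty := ⟨Q0, hQ0mem⟩
  have hclosed : IsClosed Γ := by
    rw [hΓ]
    have h1 : IsClosed {Q : Fin n → Fin n → ℝ | ∀ i j, 0 ≤ Q i j} := by
      have he : {Q : Fin n → Fin n → ℝ | ∀ i j, 0 ≤ Q i j}
          = ⋂ i, ⋂ j, {Q : Fin n → Fin n → ℝ | 0 ≤ Q i j} := by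
        ext Q; simp [Set.mem_iInter]
      rw [he]
      exact isClosed_iInter fun i => isClosed_iInter fun j =>
        isClosed_le continuous_const ((continuous_apply j).comp (continuous_apply i))
    have h2 : IsClosed {Q : Fin n → Fin n → ℝ | (∑ i, ∑ j, C i j * Q i j) ≤ ε} :=
      isClosed_le (continuous_finset_sum _ fun i _ => continuous_finset_sum _ fun j _ =>
        continuous_const.mul ((continuous_apply j).comp (continuous_apply i)))
        continuous_const
    have h3 : IsClosed {Q : Fin n → Fin n → ℝ | ∀ j, ∑ i, Q i j = 1/(n:ℝ)} := by
      have he : {Q : Fin n → Fin n → ℝ | ∀ j, ∑ i, Q i j = 1/(n:ℝ)}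
          = ⋂ j, {Q : Fin n → Fin n → ℝ | ∑ i, Q i j = 1/(n:ℝ)} := by
        ext Q; simp [Set.mem_iInter]
      rw [he]
      exact isClosed_iInter fun j => isClosed_eq
        (continuous_finset_sum _ fun i _ => (continuous_apply j).comp (continuous_apply i))
        continuous_const
    rw [Set.setOf_and, Set.setOf_and]
    exact h1.inter (h2.inter h3)
  have hbdd : Bornology.IsBounded Γ := by
    apply (Metric.isBounded_closedBall
      (x := (0 : Fin n → Fin n → ℝ)) (r := 1/(n:ℝ))).subset
    intro Q hQ
    rw [hΓ] at hQ
    obtain ⟨hQ0', hQc, hQs⟩ := hQ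
    rw [Metric.mem_closedBall, dist_zero_right]
    rw [pi_norm_le_iff_of_nonneg h1n]
    intro i
    rw [pi_norm_le_iff_of_nonneg h1n]
    intro j
    rw [Real.norm_eq_abs, abs_le]
    constructor
    · linarith [hQ0' i j]
    · calc Q i j ≤ ∑ i', Q i' j :=
            Finset.single_le_sum (fun i' _ => hQ0' i' j) (Finset.mem_univ i)
        _ = 1/(n:ℝ) := hQs j
  have hcompact : IsCompact Γ := Metric.isCompact_of_isClosed_isBounded hclosed hbdd
  have hfc : Continuous fun Q : Fin n → Fin n → ℝ => ∑ i, ∑ j, R i j * Q i j :=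
    continuous_finset_sum _ fun i _ => continuous_finset_sum _ fun j _ =>
      continuous_const.mul ((continuous_apply j).comp (continuous_apply i))
  obtain ⟨P, hPmem, hPmax⟩ := hcompact.exists_isMaxOn hΓne hfc.continuousOn
  refine ⟨hΓne, hcompact, ⟨P, hPmem, fun Q hQ => hPmax hQ⟩, ?_⟩
  obtain ⟨Qs, hQs0, hQsc, hQss, η0, hη00, hQsval⟩ := strong_dual hn R C hC0 hCd ε hε
  have hQsmem : Qs ∈ Γ := by rw [hΓ]; exact ⟨hQs0, hQsc, hQss⟩
  have hweak : ∀ Q ∈ Γ, ∀ η : ℝ, 0 ≤ η →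
      ∑ i, ∑ j, R i j * Q i j ≤ GF hn R C ε η := by
    intro Q hQ η hη
    rw [hΓ] at hQ
    exact weak_dual hn R C ε Q hQ.1 hQ.2.1 hQ.2.2 η hη
  haveI : Nonempty (Set.Ici (0:ℝ)) := ⟨⟨0, Set.mem_Ici.mpr le_rfl⟩⟩
  have himgne : ((fun Q => ∑ i, ∑ j, R i j * Q i j) '' Γ).Nonempty :=
    ⟨_, Set.mem_image_of_mem _ hQ0mem⟩
  have hbddAbove : BddAbove ((fun Q => ∑ i, ∑ j, R i j * Q i j) '' Γ) := by
    refine ⟨GF hn R C ε 0, ?_⟩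
    rintro x ⟨Q, hQ, rfl⟩
    exact hweak Q hQ 0 le_rfl
  apply le_antisymm
  · apply le_ciInf
    intro η
    apply csSup_le himgne
    rintro x ⟨Q, hQ, rfl⟩
    exact hweak Q hQ η.1 η.2
  · have hbddB : BddBelow (Set.range fun η : Set.Ici (0:ℝ) =>
        (ε * η.1 + (1 / n) * ∑ j, Finset.univ.sup' (finUnivNonempty hn)
          (fun i => R i j - η.1 * C i j))) := by
      refine ⟨∑ i, ∑ j, R i j * Qs i j, ?_⟩
      rintro x ⟨η, rfl⟩
      exact hweak Qs hQsmem η.1 η.2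
    have h1 := ciInf_le hbddB (⟨η0, hη00⟩ : Set.Ici (0:ℝ))
    refine h1.trans ?_
    have h2 : (ε * η0 + (1 / (n:ℝ)) * ∑ j, Finset.univ.sup' (finUnivNonempty hn)
        (fun i => R i j - η0 * C i j)) = ∑ i, ∑ j, R i j * Qs i j := hQsval.symm
    refine le_of_eq_of_le h2 ?_
    exact le_csSup hbddAbove (Set.mem_image_of_mem _ hQsmem)
end

section
/- Let n ≥ 1, γ > 0, η ∈ ℝ, ε ∈ ℝ, and let R, C be real n × n matrices. Define G : ℝⁿ → ℝ by G(λ) = η·ε + (1/n)·Σ_{j=1}^n λ_j + γ·Σ_{i,j} exp((R_{ij} − λ_j − η·C_{ij})/γ − 1). Set S_j = Σ_{i=1}^n exp((R_{ij} − η·C_{ij})/γ − 1) and λ*_j = γ·log(n·S_j) for each j. Then G attains its minimum over ℝⁿ uniquely at λ*, and the minimum value is G(λ*) = γ + η·ε + (γ/n)·Σ_{j=1}^n log(n·S_j). -/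
lemma aux_key (γ nr s t : ℝ) (hγ : 0 < γ) (hn : 0 < nr) (hs : 0 < s) :
    Real.exp (-t / γ) * s
      = (1 / nr) * Real.exp ((γ * Real.log (nr * s) - t) / γ) := by
  have h1 : (γ * Real.log (nr * s) - t) / γ = Real.log (nr * s) + (-t / γ) := by
    field_simp; ring
  rw [h1, Real.exp_add, Real.exp_log (by positivity)]
  field_simp

lemma aux_le (γ nr s t : ℝ) (hγ : 0 < γ) (hn : 0 < nr) (hs : 0 < s) :
    γ * Real.log (nr * s) / nr + γ / nr ≤ t / nr + γ * (Real.exp (-t / γ) * s) := by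
  rw [aux_key γ nr s t hγ hn hs]
  have he : (γ * Real.log (nr * s) - t) / γ + 1
      ≤ Real.exp ((γ * Real.log (nr * s) - t) / γ) := Real.add_one_le_exp _
  have h2 : γ * ((1 / nr) * ((γ * Real.log (nr * s) - t) / γ + 1))
      ≤ γ * ((1 / nr) * Real.exp ((γ * Real.log (nr * s) - t) / γ)) := by gcongr
  have h3 : γ * ((1 / nr) * ((γ * Real.log (nr * s) - t) / γ + 1))
      = γ * Real.log (nr * s) / nr - t / nr + γ / nr := by
    field_simp
  linarith

lemma aux_lt (γ nr s t : ℝ) (hγ : 0 < γ) (hn : 0 < nr) (hs : 0 < s)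
    (ht : t ≠ γ * Real.log (nr * s)) :
    γ * Real.log (nr * s) / nr + γ / nr < t / nr + γ * (Real.exp (-t / γ) * s) := by
  rw [aux_key γ nr s t hγ hn hs]
  have hne : (γ * Real.log (nr * s) - t) / γ ≠ 0 := by
    intro h
    apply ht
    have := (div_eq_zero_iff.mp h).resolve_right hγ.ne'
    linarith
  have he : (γ * Real.log (nr * s) - t) / γ + 1
      < Real.exp ((γ * Real.log (nr * s) - t) / γ) := by
    have := Real.add_one_lt_exp hne
    linarith
  have h2 : γ * ((1 / nr) * ((γ * Real.log (nr * s) - t) / γ + 1))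
      < γ * ((1 / nr) * Real.exp ((γ * Real.log (nr * s) - t) / γ)) := by gcongr
  have h3 : γ * ((1 / nr) * ((γ * Real.log (nr * s) - t) / γ + 1))
      = γ * Real.log (nr * s) / nr - t / nr + γ / nr := by
    field_simp
  linarith

/-- Inner λ-minimization of the Lagrangian dual of the entropy-regularized
problem (eq:langpiplug–eq:langplug): `G` attains its minimum over `ℝⁿ` uniquely
at `λ*ⱼ = γ log(n Sⱼ)`, with minimum value `γ + ηε + (γ/n) ∑ⱼ log(n Sⱼ)`. -/
theorem stmt_16 (n : ℕ) (hn : 0 < n) (γ : ℝ) (hγ : 0 < γ) (η ε : ℝ)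
    (R C : Fin n → Fin n → ℝ)
    (G : (Fin n → ℝ) → ℝ)
    (hG : ∀ lam, G lam = η * ε + (1 / n) * ∑ j, lam j
      + γ * ∑ i, ∑ j, Real.exp ((R i j - lam j - η * C i j) / γ - 1))
    (S : Fin n → ℝ)
    (hS : ∀ j, S j = ∑ i, Real.exp ((R i j - η * C i j) / γ - 1))
    (lamstar : Fin n → ℝ)
    (hlamstar : ∀ j, lamstar j = γ * Real.log (n * S j)) :
    (∀ lam, G lamstar ≤ G lam) ∧
      (∀ lam, G lam = G lamstar → lam = lamstar) ∧
      G lamstar = γ + η * ε + (γ / n) * ∑ j, Real.log (n * S j) := by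
  have hnR : (0 : ℝ) < (n : ℝ) := by exact_mod_cast hn
  have hSpos : ∀ j, 0 < S j := by
    intro j
    rw [hS j]
    exact Finset.sum_pos (fun i _ => Real.exp_pos _) ⟨⟨0, hn⟩, Finset.mem_univ _⟩
  have hGF : ∀ lam, G lam = η * ε
      + ∑ j, (lam j / n + γ * (Real.exp (-lam j / γ) * S j)) := by
    intro lam
    rw [hG lam, Finset.sum_comm]
    have h1 : ∀ j : Fin n, ∑ i, Real.exp ((R i j - lam j - η * C i j) / γ - 1)
        = Real.exp (-lam j / γ) * S j := by
      intro j
      rw [hS j, Finset.mul_sum]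
      refine Finset.sum_congr rfl fun i _ => ?_
      rw [← Real.exp_add]
      congr 1
      field_simp
      ring
    rw [Finset.sum_congr rfl fun j _ => h1 j]
    rw [Finset.sum_add_distrib, ← Finset.sum_div, ← Finset.mul_sum]
    ring
  have hterm : ∀ j : Fin n,
      lamstar j / n + γ * (Real.exp (-lamstar j / γ) * S j)
        = γ * Real.log (n * S j) / n + γ / n := by
    intro j
    have hSj := hSpos j
    rw [hlamstar j]
    congr 1
    have h0 : -(γ * Real.log (↑n * S j)) / γ = -Real.log (↑n * S j) := by
      field_simp
    rw [h0, Real.exp_neg, Real.exp_log (by positivity)]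
    field_simp
  refine ⟨?_, ?_, ?_⟩
  · intro lam
    rw [hGF, hGF]
    gcongr (η * ε + ?_)
    apply Finset.sum_le_sum
    intro j _
    rw [hterm j]
    exact aux_le γ n (S j) (lam j) hγ hnR (hSpos j)
  · intro lam heq
    funext j
    by_contra hne
    have hlt : G lamstar < G lam := by
      rw [hGF, hGF]
      have : ∑ j, (lamstar j / ↑n + γ * (Real.exp (-lamstar j / γ) * S j))
          < ∑ j, (lam j / ↑n + γ * (Real.exp (-lam j / γ) * S j)) := by
        apply Finset.sum_lt_sum
        · intro k _
          rw [hterm k]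
          exact aux_le γ n (S k) (lam k) hγ hnR (hSpos k)
        · refine ⟨j, Finset.mem_univ _, ?_⟩
          rw [hterm j]
          exact aux_lt γ n (S j) (lam j) hγ hnR (hSpos j)
            (by rw [← hlamstar j]; exact hne)
      linarith
    linarith [heq.ge, hlt]
  · rw [hGF]
    rw [Finset.sum_congr rfl fun j _ => hterm j]
    rw [Finset.sum_add_distrib, Finset.sum_const, Finset.card_univ, Fintype.card_fin,
      ← Finset.sum_div, ← Finset.mul_sum, nsmul_eq_mul]
    field_simp
    ring
end

section
/- Let n ≥ 1, let R, C be real n × n matrices, let ε ≥ 0 and η* ≥ 0, and define Γ = {Π ∈ ℝ^{n×n} : Π_{ij} ≥ 0 for all i, j; Σ_{i,j} C_{ij}·Π_{ij} ≤ ε; and Σ_i Π_{ij} = 1/n for every column j}. Suppose Π ∈ ℝ^{n×n} is such that for each column j there is an index i_j with Π_{i_j, j} = 1/n, Π_{ij} = 0 for i ≠ i_j, R_{i_j, j} − η*·C_{i_j, j} = max_{1 ≤ i ≤ n} (R_{ij} − η*·C_{ij}), and moreover Σ_{i,j} C_{ij}·Π_{ij} = ε. Then Π ∈ Γ, Σ_{i,j}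 R_{ij}·Π_{ij} = ε·η* + (1/n)·Σ_{j=1}^n max_{1 ≤ i ≤ n} (R_{ij} − η*·C_{ij}), and Π maximizes Σ_{i,j} R_{ij}·Π'_{ij} over all Π' ∈ Γ. -/
/-- Complementary-slackness optimality certificate for the primal-recovery step
of Algorithm 2: a transport matrix placing mass `1/n` in each column at an argmax
of `Rᵢⱼ - η* Cᵢⱼ`, with total transport cost exactly `ε`, is feasible, attains the
dual objective value `M(η*)`, and hence is optimal for the LP (eq:pistar). -/
theorem stmt_17 (n : ℕ) (hn : 0 < n) (R C : Fin n → Fin n → ℝ)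
    (ε : ℝ) (hε : 0 ≤ ε) (ηstar : ℝ) (hηstar : 0 ≤ ηstar)
    (Pmat : Fin n → Fin n → ℝ) (sel : Fin n → Fin n)
    (hval : ∀ j, Pmat (sel j) j = 1 / n)
    (hzero : ∀ j i, i ≠ sel j → Pmat i j = 0)
    (hmax : ∀ j, R (sel j) j - ηstar * C (sel j) j =
      Finset.univ.sup' (finUnivNonempty hn) (fun i => R i j - ηstar * C i j))
    (hcost : ∑ i, ∑ j, C i j * Pmat i j = ε) :
    ((∀ i j, 0 ≤ Pmat i j) ∧ (∑ i, ∑ j, C i j * Pmat i j) ≤ ε ∧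
        ∀ j, ∑ i, Pmat i j = 1 / n) ∧
      (∑ i, ∑ j, R i j * Pmat i j =
        ε * ηstar + (1 / n) * ∑ j, Finset.univ.sup' (finUnivNonempty hn)
          (fun i => R i j - ηstar * C i j)) ∧
      ∀ Q : Fin n → Fin n → ℝ, (∀ i j, 0 ≤ Q i j) →
        (∑ i, ∑ j, C i j * Q i j) ≤ ε → (∀ j, ∑ i, Q i j = 1 / n) →
        ∑ i, ∑ j, R i j * Q i j ≤ ∑ i, ∑ j, R i j * Pmat i j := by
  set M : Fin n → ℝ := fun j =>
    Finset.univ.sup' (finUnivNonempty hn) (fun i => R i j - ηstar * C i j) with hM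
  have hninv : (0:ℝ) ≤ 1 / n := by positivity
  have hnonneg : ∀ i j, 0 ≤ Pmat i j := by
    intro i j
    by_cases h : i = sel j
    · rw [h, hval]; exact hninv
    · rw [hzero j i h]
  have hcol : ∀ j, ∑ i, Pmat i j = 1 / n := by
    intro j
    rw [Finset.sum_eq_single (sel j)]
    · exact hval j
    · intro i _ hi; exact hzero j i hi
    · intro h; exact absurd (Finset.mem_univ _) h
  have hsum : ∀ (A : Fin n → Fin n → ℝ),
      ∑ i, ∑ j, A i j * Pmat i j = ∑ j, A (sel j) j * (1/n) := by
    intro A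
    rw [Finset.sum_comm]
    refine Finset.sum_congr rfl fun j _ => ?_
    rw [Finset.sum_eq_single (sel j)]
    · rw [hval]
    · intro i _ hi; rw [hzero j i hi, mul_zero]
    · intro h; exact absurd (Finset.mem_univ _) h
  have hcostP : ∑ j, C (sel j) j * (1/n) = ε := by rw [← hsum C]; exact hcost
  have hvalue : ∑ i, ∑ j, R i j * Pmat i j = ε * ηstar + (1/n) * ∑ j, M j := by
    rw [hsum R, ← hcostP, Finset.sum_mul, Finset.mul_sum, ← Finset.sum_add_distrib]
    refine Finset.sum_congr rfl fun j _ => ?_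
    have h := hmax j
    simp only [hM]
    rw [← h]
    ring
  refine ⟨⟨hnonneg, le_of_eq hcost, hcol⟩, hvalue, ?_⟩
  intro Q hQ0 hQC hQcol
  have key : ∑ i, ∑ j, R i j * Q i j
      ≤ (∑ i, ∑ j, C i j * Q i j) * ηstar + (1/n) * ∑ j, M j := by
    have h1 : ∑ i, ∑ j, (R i j - ηstar * C i j) * Q i j ≤ ∑ j, M j * (1/n) := by
      rw [Finset.sum_comm]
      refine Finset.sum_le_sum fun j _ => ?_
      calc ∑ i, (R i j - ηstar * C i j) * Q i j
          ≤ ∑ i, M j * Q i j := by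
            refine Finset.sum_le_sum fun i _ => ?_
            exact mul_le_mul_of_nonneg_right
              (Finset.le_sup' (fun i => R i j - ηstar * C i j) (Finset.mem_univ i))
              (hQ0 i j)
        _ = M j * (1/n) := by rw [← Finset.mul_sum, hQcol j]
    have h2 : ∑ i, ∑ j, R i j * Q i j
        = ∑ i, ∑ j, (R i j - ηstar * C i j) * Q i j
          + (∑ i, ∑ j, C i j * Q i j) * ηstar := by
      rw [Finset.sum_mul, ← Finset.sum_add_distrib]
      refine Finset.sum_congr rfl fun i _ => ?_
      rw [Finset.sum_mul, ← Finset.sum_add_distrib]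
      refine Finset.sum_congr rfl fun j _ => ?_
      ring
    rw [h2]
    have h3 : ∑ j, M j * (1/n) = (1/n) * ∑ j, M j := by
      rw [Finset.mul_sum]; exact Finset.sum_congr rfl fun j _ => mul_comm _ _
    linarith [h1]
  calc ∑ i, ∑ j, R i j * Q i j
      ≤ (∑ i, ∑ j, C i j * Q i j) * ηstar + (1/n) * ∑ j, M j := key
    _ ≤ ε * ηstar + (1/n) * ∑ j, M j := by
        have := mul_le_mul_of_nonneg_right hQC hηstar
        linarith
    _ = ∑ i, ∑ j, R i j * Pmat i j := hvalue.symm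
end
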